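/- arXiv:2501.04209 — 7 statements merged into one kernel-verified Lean document; each statement's English description precedes it below -/
import Mathlib

section
/- Let n be an odd primitive non-deficient number which is perfect (i.e., σ(n) = 2n). Then S(n) > 2·log(24·√2/25)/√n + 3/n. -/
/-- The sum of the positive divisors of `n`. -/
def sigma1 (n : ℕ) : ℕ := ∑ d ∈ n.divisors, d

/-- `H n = n / φ(n)`. -/
noncomputable def H (n : ℕ) : ℝ := (n : ℝ) / (Nat.totient n : ℝ)

/-- The surplus `S n = H n - 2`. -/
noncomputable def S (n : ℕ) : ℝ := H n - 2

/-!
Write `n = p ^ a * d` with `p ∤ d`. Since `φ m * σ m ≤ m ^ 2` for every `m`, and the `p`-part of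
this product is known exactly, `σ n = 2 * n` gives `S n * p ^ (a + 1) ≥ H n > 2` for every prime
power `p ^ a ∥ n`. By Euler's argument (`σ (p ^ a)` is even when `a` is odd), at most one
exponent of an odd perfect number is odd. If three prime factors occur at least squared,
multiplying their bounds gives `S n ^ 2 * n > 4`. Otherwise `n` has at most three prime factors,
and `H n > 2` forces them to be `3`, `5` and some `q ≤ 15`; multiplying the three bounds gives
`S n ^ 3 * 225 * n > 8`, while the parity of the exponents gives `n ≥ 3 ^ 2 * 5 ^ 2 * 7`. Either
way `S n` exceeds a multiple of `1 / √n` that beats the claimed bound, as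
`2 * log (24 * √2 / 25) < 9 / 10`.
-/

open ArithmeticFunction Finset
open scoped ArithmeticFunction.sigma Nat

theorem sigma1_eq_sigma_one (n : ℕ) : sigma1 n = σ 1 n := (sigma_one_apply n).symm

theorem Nat.Prime.sigma_one_pow_mul_sub_one {p : ℕ} (hp : p.Prime) (k : ℕ) :
    σ 1 (p ^ k) * (p - 1) = p ^ (k + 1) - 1 := by
  rw [sigma_one_apply_prime_pow hp, geom_sum_mul_of_one_le hp.one_lt.le]

theorem Nat.Prime.mul_totient_mul_sigma_one_pow {p k : ℕ} (hp : p.Prime) (hk : 0 < k) :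
    p * (φ (p ^ k) * σ 1 (p ^ k)) = p ^ k * (p ^ (k + 1) - 1) := by
  rw [Nat.totient_prime_pow hp hk, ← hp.sigma_one_pow_mul_sub_one k]
  obtain ⟨k, rfl⟩ := Nat.exists_eq_add_one_of_ne_zero hk.ne'
  rw [Nat.add_sub_cancel, pow_succ]
  ring

theorem Nat.Prime.even_sigma_one_pow {p a : ℕ} (hp : p.Prime) (hpo : Odd p) (ha : Odd a) :
    Even (σ 1 (p ^ a)) := by
  rw [sigma_one_apply_prime_pow hp, even_sum_iff_even_card_odd,
    filter_true_of_mem fun k _ => hpo.pow, card_range]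
  exact ha.add_one

theorem totient_mul_sigma_one_le_sq (m : ℕ) : φ m * σ 1 m ≤ m ^ 2 := by
  induction m using Nat.recOnPosPrimePosCoprime with
  | prime_pow p k hp hk =>
    refine Nat.le_of_mul_le_mul_left ?_ hp.pos
    calc p * (φ (p ^ k) * σ 1 (p ^ k)) = p ^ k * (p ^ (k + 1) - 1) :=
          hp.mul_totient_mul_sigma_one_pow hk
      _ ≤ p ^ k * p ^ (k + 1) := Nat.mul_le_mul_left _ (Nat.sub_le _ _)
      _ = p * (p ^ k) ^ 2 := by ring
  | zero => simp
  | one => simp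
  | coprime a b _ _ hab ha hb =>
    calc φ (a * b) * σ 1 (a * b) = (φ a * σ 1 a) * (φ b * σ 1 b) := by
          rw [Nat.totient_mul hab, isMultiplicative_sigma.map_mul_of_coprime hab]; ring
      _ ≤ a ^ 2 * b ^ 2 := Nat.mul_le_mul ha hb
      _ = (a * b) ^ 2 := by ring

theorem pow_succ_mul_totient_mul_sigma_one_le {n p : ℕ} (hp : p.Prime) (hpn : p ∣ n)
    (hn : n ≠ 0) :
    p ^ (n.factorization p + 1) * (φ n * σ 1 n) ≤
      n ^ 2 * (p ^ (n.factorization p + 1) - 1) := by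
  set a := n.factorization p
  set d := ordCompl[p] n
  have hsplit : p ^ a * d = n := Nat.ordProj_mul_ordCompl_eq_self n p
  have hcop : (p ^ a).Coprime d := (Nat.coprime_ordCompl hp hn).pow_left a
  have ha : 0 < a := hp.factorization_pos_of_dvd hn hpn
  calc p ^ (a + 1) * (φ n * σ 1 n)
      = p ^ a * (p * (φ (p ^ a) * σ 1 (p ^ a))) * (φ d * σ 1 d) := by
        rw [← hsplit, Nat.totient_mul hcop, isMultiplicative_sigma.map_mul_of_coprime hcop]
        ring
    _ = p ^ a * (p ^ a * (p ^ (a + 1) - 1)) * (φ d * σ 1 d) := by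
        rw [hp.mul_totient_mul_sigma_one_pow ha]
    _ ≤ p ^ a * (p ^ a * (p ^ (a + 1) - 1)) * d ^ 2 :=
        Nat.mul_le_mul_left _ (totient_mul_sigma_one_le_sq d)
    _ = n ^ 2 * (p ^ (a + 1) - 1) := by rw [← hsplit]; ring

theorem prod_pow_factorization_dvd {n : ℕ} {T : Finset ℕ} (hT : T ⊆ n.primeFactors) :
    ∏ p ∈ T, p ^ n.factorization p ∣ n := by
  rcases eq_or_ne n 0 with rfl | hn
  · exact dvd_zero _
  calc ∏ p ∈ T, p ^ n.factorization p ∣ ∏ p ∈ n.primeFactors, p ^ n.factorization p :=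
        prod_dvd_prod_of_subset _ _ _ hT
    _ = n := Nat.prod_factorization_pow_eq_self hn

theorem H_eq_prod {n : ℕ} (hn : n ≠ 0) : H n = ∏ p ∈ n.primeFactors, (p / (p - 1) : ℝ) := by
  have h := congrArg (Rat.cast : ℚ → ℝ) (Nat.totient_eq_mul_prod_factors n)
  push_cast at h
  rw [H, h, div_mul_cancel_left₀ (by exact_mod_cast hn), ← prod_inv_distrib]
  refine prod_congr rfl fun p hp => ?_
  have : (p : ℝ) ≠ 0 := by exact_mod_cast (Nat.pos_of_mem_primeFactors hp).ne'
  field_simp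

theorem div_sub_one_le_div_sub_one {x y : ℝ} (hy : 1 < y) (hxy : y ≤ x) :
    x / (x - 1) ≤ y / (y - 1) := by
  rw [div_le_div_iff₀ (by linarith) (by linarith)]
  linarith

/-- The `i`-th smallest element of `s` is at least `m + 2 * i`, and `x ↦ x / (x - 1)` is
decreasing. -/
theorem prod_div_sub_one_le {m K : ℕ} (hm : 2 ≤ m) {s : Finset ℕ}
    (hs : ∀ p ∈ s, Odd p ∧ m ≤ p) (hK : #s ≤ K) :
    ∏ p ∈ s, (p / (p - 1) : ℝ) ≤
      ∏ k ∈ range K, (((m + 2 * k : ℕ) : ℝ) / ((m + 2 * k : ℕ) - 1)) := by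
  induction s using Finset.induction_on_min generalizing m K with
  | empty =>
    refine one_le_prod fun k _ => ?_
    have : (2 : ℝ) ≤ (m + 2 * k : ℕ) := by exact_mod_cast (by omega : 2 ≤ m + 2 * k)
    exact (one_le_div (by linarith)).2 (by linarith)
  | insert a s ha ih =>
    have has : a ∉ s := fun h => (ha a h).false
    rw [card_insert_of_notMem has] at hK
    obtain ⟨K, rfl⟩ : ∃ K', K = K' + 1 := ⟨K - 1, by omega⟩
    obtain ⟨hao, hma⟩ := hs a (mem_insert_self a s)
    have hs' : ∀ p ∈ s, Odd p ∧ m + 2 ≤ p := fun p hp => by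
      obtain ⟨hpo, -⟩ := hs p (mem_insert_of_mem hp)
      have := ha p hp
      obtain ⟨i, rfl⟩ := hao
      obtain ⟨j, rfl⟩ := hpo
      exact ⟨⟨j, rfl⟩, by omega⟩
    have hm' : (2 : ℝ) ≤ m := by exact_mod_cast hm
    have hfirst : (a / (a - 1) : ℝ) ≤ ((m + 2 * 0 : ℕ) : ℝ) / ((m + 2 * 0 : ℕ) - 1) := by
      simpa using div_sub_one_le_div_sub_one (by linarith) (by exact_mod_cast hma)
    have hrest := (ih (by omega) hs' (by omega : #s ≤ K)).trans_eq <| prod_congr rfl fun k _ => by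
      rw [show m + 2 + 2 * k = m + 2 * (k + 1) by ring]
    rw [prod_insert has, prod_range_succ', mul_comm _ (_ / _)]
    refine mul_le_mul hfirst hrest (prod_nonneg fun p hp => ?_) (hfirst.trans' ?_)
    · have : (m : ℝ) + 2 ≤ p := by exact_mod_cast (hs' p hp).2
      exact div_nonneg (by linarith) (by linarith)
    · have : (2 : ℝ) ≤ a := by exact_mod_cast hm.trans hma
      exact div_nonneg (by linarith) (by linarith)

theorem eq_three_five_of_two_lt_prod {s : Finset ℕ} (hs : ∀ p ∈ s, Odd p ∧ 3 ≤ p)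
    (hcard : #s ≤ 3) (h2 : 2 < ∏ p ∈ s, (p / (p - 1) : ℝ)) :
    ∃ q, 7 ≤ q ∧ q < 16 ∧ s = {3, 5, q} := by
  have hnext : ∀ {t : Finset ℕ} {m : ℕ}, Odd m → (∀ p ∈ t, Odd p ∧ m ≤ p) →
      ∀ p ∈ t.erase m, Odd p ∧ m + 2 ≤ p := by
    rintro t m ⟨i, rfl⟩ ht p hp
    obtain ⟨⟨j, rfl⟩, hle⟩ := ht p (mem_of_mem_erase hp)
    exact ⟨⟨j, rfl⟩, by have := ne_of_mem_erase hp; omega⟩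
  have h3 : 3 ∈ s := by
    by_contra h3
    have : ∏ p ∈ s, (p / (p - 1) : ℝ) ≤ 105 / 64 := (prod_div_sub_one_le (m := 5) (by norm_num)
      (by simpa only [erase_eq_of_notMem h3] using hnext (by decide) hs) hcard).trans_eq
      (by norm_num [prod_range_succ])
    linarith
  have hs5 : ∀ p ∈ s.erase 3, Odd p ∧ 5 ≤ p := hnext (by decide) hs
  rw [← mul_prod_erase s _ h3, show ((3 : ℕ) / ((3 : ℕ) - 1) : ℝ) = 3 / 2 by norm_num] at h2
  have h5 : 5 ∈ s.erase 3 := by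
    by_contra h5
    have : ∏ p ∈ s.erase 3, (p / (p - 1) : ℝ) ≤ 21 / 16 := (prod_div_sub_one_le (m := 7)
      (by norm_num) (by simpa only [erase_eq_of_notMem h5] using hnext (by decide) hs5)
      (by rw [card_erase_of_mem h3]; omega : #(s.erase 3) ≤ 2)).trans_eq
      (by norm_num [prod_range_succ])
    linarith
  have hs7 : ∀ p ∈ (s.erase 3).erase 5, Odd p ∧ 7 ≤ p := hnext (by decide) hs5
  rw [← mul_prod_erase _ _ h5, show ((5 : ℕ) / ((5 : ℕ) - 1) : ℝ) = 5 / 4 by norm_num] at h2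
  obtain ⟨q, hq⟩ : ∃ q, (s.erase 3).erase 5 = {q} := by
    rcases ((s.erase 3).erase 5).eq_empty_or_nonempty with he | hne
    · rw [he, prod_empty] at h2
      norm_num at h2
    · refine card_eq_one.1 (le_antisymm ?_ (card_pos.2 hne))
      rw [card_erase_of_mem h5, card_erase_of_mem h3]
      omega
  have hq7 := (hs7 q (hq ▸ mem_singleton_self q)).2
  rw [hq, prod_singleton] at h2
  have hq16 : (q : ℝ) < 16 := by
    have : (7 : ℝ) ≤ q := by exact_mod_cast hq7
    rw [← mul_assoc, mul_div_assoc', lt_div_iff₀ (by linarith)] at h2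
    linarith
  refine ⟨q, hq7, by exact_mod_cast hq16, ?_⟩
  rw [← insert_erase h3, ← insert_erase h5, hq]

theorem two_mul_log_le : 2 * Real.log (24 * √2 / 25) ≤ 9 / 10 := by
  have h2 : √2 < 3 / 2 := by rw [Real.sqrt_lt' (by norm_num)]; norm_num
  have := Real.log_le_sub_one_of_pos (x := 24 * √2 / 25) (by positivity)
  linarith

theorem div_sqrt_add_three_div_lt {c k x N : ℝ} {n : ℕ} (hx : k / √n < x) (hck : c < k)
    (hN : N ≤ n) (h9 : 9 < (k - c) ^ 2 * N) : c / √n + 3 / n < x := by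
  have hN0 : 0 < N := pos_of_mul_pos_right (h9.trans' (by norm_num)) (sq_nonneg _)
  have hr : 0 < √n := Real.sqrt_pos.2 (by linarith)
  have hn : (n : ℝ) = √n ^ 2 := (Real.sq_sqrt (by linarith)).symm
  generalize √n = r at hr hn hx
  have h3 : 3 < (k - c) * r := by
    refine lt_of_pow_lt_pow_left₀ 2 (mul_pos (by linarith) hr).le ?_
    rw [mul_pow, ← hn]
    nlinarith
  rw [hn]
  calc c / r + 3 / r ^ 2 = (c * r + 3) / r ^ 2 := by field_simp
    _ < (k * r) / r ^ 2 := by gcongr; linarith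
    _ = k / r := by field_simp
    _ < x := hx

section Perfect

variable {n : ℕ} {c : ℝ}

theorem two_mul_pow_le_H_mul (hn : σ 1 n = 2 * n) (h0 : n ≠ 0) {p : ℕ} (hp : p.Prime)
    (hpn : p ∣ n) :
    2 * (p : ℝ) ^ (n.factorization p + 1) ≤
      H n * ((p : ℝ) ^ (n.factorization p + 1) - 1) := by
  have key := pow_succ_mul_totient_mul_sigma_one_le hp hpn h0
  rw [hn] at key
  set a := n.factorization p
  have hP : 1 ≤ p ^ (a + 1) := Nat.one_le_pow _ _ hp.pos
  have hφ : (0 : ℝ) < φ n := by exact_mod_cast Nat.totient_pos.2 (Nat.pos_of_ne_zero h0)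
  have hn' : (0 : ℝ) < n := by exact_mod_cast Nat.pos_of_ne_zero h0
  have keyR : (2 * p ^ (a + 1) * φ n : ℝ) * n ≤ (n * ((p : ℝ) ^ (a + 1) - 1)) * n := by
    have := (Nat.cast_le (α := ℝ)).2 key
    push_cast [Nat.cast_sub hP] at this
    linarith
  rw [H, div_mul_eq_mul_div, le_div_iff₀ hφ]
  exact le_of_mul_le_mul_right keyR hn'

theorem two_lt_H (hn : σ 1 n = 2 * n) (h0 : n ≠ 0) : 2 < H n := by
  have h1 : n ≠ 1 := by rintro rfl; simp at hn
  have hp := Nat.minFac_prime h1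
  have key := two_mul_pow_le_H_mul hn h0 hp (Nat.minFac_dvd n)
  have hP : (1 : ℝ) < (n.minFac : ℝ) ^ (n.factorization n.minFac + 1) :=
    one_lt_pow₀ (by exact_mod_cast hp.one_lt) (Nat.succ_ne_zero _)
  nlinarith

theorem S_pos (hn : σ 1 n = 2 * n) (h0 : n ≠ 0) : 0 < S n := by
  have := two_lt_H hn h0
  rw [S]
  linarith

theorem two_lt_S_mul_pow (hn : σ 1 n = 2 * n) (h0 : n ≠ 0) {p : ℕ} (hp : p.Prime)
    (hpn : p ∣ n) : 2 < S n * (p : ℝ) ^ (n.factorization p + 1) := by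
  have := two_mul_pow_le_H_mul hn h0 hp hpn
  have := two_lt_H hn h0
  rw [S]
  linarith

theorem four_lt_S_sq_mul_pow_cube (hn : σ 1 n = 2 * n) (h0 : n ≠ 0) {p : ℕ} (hp : p.Prime)
    (hpn : p ∣ n) (ha : 2 ≤ n.factorization p) :
    4 < S n ^ 2 * ((p : ℝ) ^ n.factorization p) ^ 3 := by
  set a := n.factorization p
  have hpow : ((p : ℝ) ^ (a + 1)) ^ 2 ≤ ((p : ℝ) ^ a) ^ 3 := by
    rw [← pow_mul, ← pow_mul]
    exact pow_le_pow_right₀ (by exact_mod_cast hp.one_le) (by omega)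
  calc (4 : ℝ) = 2 ^ 2 := by norm_num
    _ < (S n * (p : ℝ) ^ (a + 1)) ^ 2 := by
        gcongr
        exact two_lt_S_mul_pow hn h0 hp hpn
    _ = S n ^ 2 * ((p : ℝ) ^ (a + 1)) ^ 2 := mul_pow _ _ _
    _ ≤ S n ^ 2 * ((p : ℝ) ^ a) ^ 3 := by gcongr

theorem two_pow_card_lt_S_pow_mul (hn : σ 1 n = 2 * n) (h0 : n ≠ 0) :
    2 ^ #n.primeFactors < S n ^ #n.primeFactors * (n * ∏ p ∈ n.primeFactors, (p : ℝ)) := by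
  have h1 : n ≠ 1 := by rintro rfl; simp at hn
  have hne : n.primeFactors.Nonempty := Nat.nonempty_primeFactors.2 (by omega)
  have hprod := prod_lt_prod_of_nonempty (fun _ _ => two_pos) (fun p hp =>
    two_lt_S_mul_pow hn h0 (Nat.prime_of_mem_primeFactors hp) (Nat.dvd_of_mem_primeFactors hp)) hne
  have hn' : ∏ p ∈ n.primeFactors, (p : ℝ) ^ n.factorization p = n := by
    exact_mod_cast Nat.prod_factorization_pow_eq_self h0
  simpa only [prod_const, prod_mul_distrib, pow_succ, hn', mul_assoc] using hprod

theorem four_lt_S_sq_mul {T : Finset ℕ} (hn : σ 1 n = 2 * n) (h0 : n ≠ 0)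
    (hT : T ⊆ n.primeFactors) (hT3 : #T = 3) (ha : ∀ p ∈ T, 2 ≤ n.factorization p) :
    4 < S n ^ 2 * n := by
  have hprod := prod_lt_prod_of_nonempty (fun _ _ => four_pos) (fun p hp =>
    four_lt_S_sq_mul_pow_cube hn h0 (Nat.prime_of_mem_primeFactors (hT hp))
      (Nat.dvd_of_mem_primeFactors (hT hp)) (ha p hp)) (card_pos.1 (by omega))
  rw [prod_const, prod_mul_distrib, prod_const, prod_pow, hT3] at hprod
  have hle : ∏ p ∈ T, (p : ℝ) ^ n.factorization p ≤ n := by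
    exact_mod_cast Nat.le_of_dvd (Nat.pos_of_ne_zero h0) (prod_pow_factorization_dvd hT)
  have hS := S_pos hn h0
  refine lt_of_pow_lt_pow_left₀ 3 (by positivity) ?_
  calc (4 : ℝ) ^ 3 < (S n ^ 2) ^ 3 * (∏ p ∈ T, (p : ℝ) ^ n.factorization p) ^ 3 := hprod
    _ ≤ (S n ^ 2) ^ 3 * n ^ 3 := by gcongr
    _ = (S n ^ 2 * n) ^ 3 := (mul_pow _ _ _).symm

theorem lt_S_of_three_le_card_sq (hn : σ 1 n = 2 * n) (h0 : n ≠ 0)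
    (hsq : 3 ≤ #{p ∈ n.primeFactors | 2 ≤ n.factorization p}) (hc : c ≤ 9 / 10) :
    c / √n + 3 / n < S n := by
  obtain ⟨T, hTsq, hT3⟩ := exists_subset_card_eq hsq
  have hT : T ⊆ n.primeFactors := hTsq.trans (filter_subset _ _)
  have ha : ∀ p ∈ T, 2 ≤ n.factorization p := fun p hp => (mem_filter.1 (hTsq hp)).2
  have h64 : 64 ≤ n := calc
    64 = ∏ _p ∈ T, 2 ^ 2 := by rw [prod_const, hT3]; norm_num
    _ ≤ ∏ p ∈ T, p ^ n.factorization p := prod_le_prod' fun p hp =>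
        have hp2 := (Nat.prime_of_mem_primeFactors (hT hp)).two_le
        (Nat.pow_le_pow_left hp2 2).trans (Nat.pow_le_pow_right (by omega) (ha p hp))
    _ ≤ n := Nat.le_of_dvd (Nat.pos_of_ne_zero h0) (prod_pow_factorization_dvd hT)
  have hS : 2 / √n < S n := by
    refine lt_of_pow_lt_pow_left₀ 2 (S_pos hn h0).le ?_
    rw [div_pow, Real.sq_sqrt (Nat.cast_nonneg _), div_lt_iff₀ (by positivity)]
    linarith [four_lt_S_sq_mul hn h0 hT hT3 ha]
  exact div_sqrt_add_three_div_lt hS (by linarith) (by exact_mod_cast h64 : (64 : ℝ) ≤ n)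
    (by nlinarith)

end Perfect

section OddPerfect

variable {n : ℕ} {c : ℝ}

theorem eq_of_odd_factorization (hodd : Odd n) (hn : σ 1 n = 2 * n) {p q : ℕ}
    (hp : p ∈ n.primeFactors) (hq : q ∈ n.primeFactors) (hpo : Odd (n.factorization p))
    (hqo : Odd (n.factorization q)) : p = q := by
  by_contra hpq
  have hσ : σ 1 n = ∏ r ∈ n.primeFactors, σ 1 (r ^ n.factorization r) :=
    isMultiplicative_sigma.multiplicative_factorization _ hodd.pos.ne'
  have hdvd : σ 1 (p ^ n.factorization p) * σ 1 (q ^ n.factorization q) ∣ σ 1 n := by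
    rw [hσ, ← prod_pair (f := fun r => σ 1 (r ^ n.factorization r)) hpq]
    exact prod_dvd_prod_of_subset _ _ _ (insert_subset hp (singleton_subset_iff.2 hq))
  have hoddp : ∀ {r}, r ∈ n.primeFactors → Odd r := fun hr =>
    hodd.of_dvd_nat (Nat.dvd_of_mem_primeFactors hr)
  have h4 : 2 * 2 ∣ 2 * n := hn ▸ (mul_dvd_mul
    ((Nat.prime_of_mem_primeFactors hp).even_sigma_one_pow (hoddp hp) hpo).two_dvd
    ((Nat.prime_of_mem_primeFactors hq).even_sigma_one_pow (hoddp hq) hqo).two_dvd).trans hdvd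
  have := Nat.odd_iff.1 hodd
  omega

theorem card_primeFactors_le_card_sq_add_one (hodd : Odd n) (hn : σ 1 n = 2 * n) :
    #n.primeFactors ≤ #{p ∈ n.primeFactors | 2 ≤ n.factorization p} + 1 := by
  have hsimple : ∀ p ∈ n.primeFactors, ¬2 ≤ n.factorization p → Odd (n.factorization p) :=
    fun p hp h => by
      have := (Nat.prime_of_mem_primeFactors hp).factorization_pos_of_dvd hodd.pos.ne'
        (Nat.dvd_of_mem_primeFactors hp)
      rw [show n.factorization p = 1 by omega]
      exact odd_one
  have hle : #{p ∈ n.primeFactors | ¬2 ≤ n.factorization p} ≤ 1 :=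
    card_le_one.2 fun p hp q hq => by
      rw [mem_filter] at hp hq
      exact eq_of_odd_factorization hodd hn hp.1 hq.1 (hsimple p hp.1 hp.2) (hsimple q hq.1 hq.2)
  have := card_filter_add_card_filter_not (s := n.primeFactors)
    (fun p => 2 ≤ n.factorization p)
  omega

theorem le_of_primeFactors_eq_three_five (hodd : Odd n) (hn : σ 1 n = 2 * n) {q : ℕ}
    (hq : 7 ≤ q) (hs : n.primeFactors = {3, 5, q}) : 1575 ≤ n := by
  have h0 : n ≠ 0 := hodd.pos.ne'
  obtain ⟨h3, h5, hq'⟩ : 3 ∈ n.primeFactors ∧ 5 ∈ n.primeFactors ∧ q ∈ n.primeFactors := by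
    simp [hs]
  have hpos : ∀ p ∈ n.primeFactors, 1 ≤ n.factorization p := fun p hp =>
    (Nat.prime_of_mem_primeFactors hp).factorization_pos_of_dvd h0 (Nat.dvd_of_mem_primeFactors hp)
  have hpair : ∀ {p p'}, p ∈ n.primeFactors → p' ∈ n.primeFactors → p ≠ p' →
      ¬(n.factorization p % 2 = 1 ∧ n.factorization p' % 2 = 1) := fun hp hp' hne h =>
    hne (eq_of_odd_factorization hodd hn hp hp' (Nat.odd_iff.2 h.1) (Nat.odd_iff.2 h.2))
  have ha := hpos 3 h3
  have hb := hpos 5 h5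
  have hc := hpos q hq'
  have hsq : 2 ≤ n.factorization 3 ∧ 2 ≤ n.factorization 5 ∨
      2 ≤ n.factorization 3 ∧ 2 ≤ n.factorization q ∨
      2 ≤ n.factorization 5 ∧ 2 ≤ n.factorization q := by
    have := hpair h3 h5 (by decide)
    have := hpair h3 hq' (by omega)
    have := hpair h5 hq' (by omega)
    omega
  have hn_eq : 3 ^ n.factorization 3 * (5 ^ n.factorization 5 * q ^ n.factorization q) = n := by
    have := Nat.prod_factorization_pow_eq_self h0
    rwa [Nat.prod_factorization_eq_prod_primeFactors, hs, prod_insert (by simp; omega),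
      prod_insert (by simp; omega), prod_singleton] at this
  calc 1575 ≤ 3 ^ n.factorization 3 * (5 ^ n.factorization 5 * 7 ^ n.factorization q) := by
        rcases hsq with ⟨ha, hb⟩ | ⟨ha, hc⟩ | ⟨hb, hc⟩
        · calc 1575 = 3 ^ 2 * (5 ^ 2 * 7 ^ 1) := by norm_num
            _ ≤ _ := by gcongr <;> omega
        · calc 1575 ≤ 3 ^ 2 * (5 ^ 1 * 7 ^ 2) := by norm_num
            _ ≤ _ := by gcongr <;> omega
        · calc 1575 ≤ 3 ^ 1 * (5 ^ 2 * 7 ^ 2) := by norm_num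
            _ ≤ _ := by gcongr <;> omega
    _ ≤ 3 ^ n.factorization 3 * (5 ^ n.factorization 5 * q ^ n.factorization q) := by gcongr
    _ = n := hn_eq

theorem lt_S_of_card_primeFactors_le_three (hodd : Odd n) (hn : σ 1 n = 2 * n)
    (h3 : #n.primeFactors ≤ 3) (hc : c ≤ 9 / 10) : c / √n + 3 / n < S n := by
  have h0 : n ≠ 0 := hodd.pos.ne'
  have hodd3 : ∀ p ∈ n.primeFactors, Odd p ∧ 3 ≤ p := fun p hp => by
    have hpo := hodd.of_dvd_nat (Nat.dvd_of_mem_primeFactors hp)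
    have := (Nat.prime_of_mem_primeFactors hp).two_le
    exact ⟨hpo, by obtain ⟨k, rfl⟩ := hpo; omega⟩
  obtain ⟨q, hq7, hq16, hs⟩ :=
    eq_three_five_of_two_lt_prod hodd3 h3 (H_eq_prod h0 ▸ two_lt_H hn h0)
  have h1575 : (1575 : ℝ) ≤ n := by exact_mod_cast le_of_primeFactors_eq_three_five hodd hn hq7 hs
  have h8 : 8 < S n ^ 3 * (n * 225) := by
    have := two_pow_card_lt_S_pow_mul hn h0
    have hq15 : (q : ℝ) ≤ 15 := by exact_mod_cast (by omega : q ≤ 15)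
    rw [hs, card_insert_of_notMem (by simp; omega), card_pair (by omega),
      prod_insert (by simp; omega), prod_pair (by omega)] at this
    have hS := S_pos hn h0
    calc (8 : ℝ) = 2 ^ 3 := by norm_num
      _ < S n ^ 3 * (n * (3 * (5 * q))) := by exact_mod_cast this
      _ ≤ S n ^ 3 * (n * 225) := by gcongr; linarith
  have hS : 1 / √n < S n := by
    have hr : 29 ≤ √n := (Real.le_sqrt (by norm_num) (by positivity)).2 (by linarith)
    refine lt_of_pow_lt_pow_left₀ 3 (S_pos hn h0).le ?_
    rw [div_pow, one_pow, pow_succ, Real.sq_sqrt (Nat.cast_nonneg _),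
      div_lt_iff₀ (by positivity)]
    nlinarith
  exact div_sqrt_add_three_div_lt hS (by linarith) h1575 (by nlinarith)

end OddPerfect

theorem surplus_lower_bound_perfect_general (n : ℕ) (hodd : Odd n)
    (hperfect : sigma1 n = 2 * n) :
    S n > 2 * Real.log (24 * Real.sqrt 2 / 25) / Real.sqrt n + 3 / n := by
  rw [sigma1_eq_sigma_one] at hperfect
  rcases le_or_gt 3 #{p ∈ n.primeFactors | 2 ≤ n.factorization p} with hsq | hsq
  · exact lt_S_of_three_le_card_sq hperfect hodd.pos.ne' hsq two_mul_log_le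
  · exact lt_S_of_card_primeFactors_le_three hodd hperfect
      (by have := card_primeFactors_le_card_sq_add_one hodd hperfect; omega) two_mul_log_le

theorem surplus_lower_bound_perfect (n : ℕ) (hn : 0 < n) (hodd : Odd n)
    (hnondef : 2 * n ≤ sigma1 n)
    (hprim : ∀ d : ℕ, d ∣ n → d < n → sigma1 d < 2 * d)
    (hperfect : sigma1 n = 2 * n) :
    S n > 2 * Real.log (24 * Real.sqrt 2 / 25) / Real.sqrt n + 3 / n :=
  surplus_lower_bound_perfect_general n hodd hperfect
end

section
/- If n is an odd non-deficient number, then S(n) > 3/(5·√n). -/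
open Finset

theorem sigma1_mul_totient_mul {m n : ℕ} (h : m.Coprime n) :
    sigma1 (m * n) * (m * n).totient = sigma1 m * m.totient * (sigma1 n * n.totient) := by
  simp only [sigma1, ← ArithmeticFunction.sigma_one_apply,
    ArithmeticFunction.isMultiplicative_sigma.map_mul_of_coprime h, Nat.totient_mul h]
  ring

theorem sigma1_mul_totient_prime_pow {p k : ℕ} (hp : p.Prime) (hk : k ≠ 0) :
    ((sigma1 (p ^ k) * (p ^ k).totient : ℕ) : ℝ) =
      ((p : ℝ) ^ k) ^ 2 * (1 - 1 / (p : ℝ) ^ (k + 1)) := by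
  obtain ⟨j, rfl⟩ : ∃ j, k = j + 1 := ⟨k - 1, by omega⟩
  have hp0 : (p : ℝ) ≠ 0 := by exact_mod_cast hp.ne_zero
  rw [sigma1, Nat.sum_divisors_prime_pow hp, Nat.totient_prime_pow_succ hp]
  push_cast [hp.one_le]
  rw [mul_left_comm, geom_sum_mul]
  field_simp
  ring

theorem sigma1_mul_totient_eq_prod {n : ℕ} (hn : n ≠ 0) :
    ((sigma1 n * n.totient : ℕ) : ℝ) =
      (n : ℝ) ^ 2 * ∏ p ∈ n.primeFactors, (1 - 1 / (p : ℝ) ^ (n.factorization p + 1)) := by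
  rw [Nat.multiplicative_factorization (fun m => sigma1 m * m.totient)
    (fun _ _ => sigma1_mul_totient_mul) (by simp [sigma1]) hn]
  conv_rhs => enter [1, 1]; rw [← Nat.prod_factorization_pow_eq_self hn]
  simp only [Finsupp.prod, Nat.support_factorization, Nat.cast_prod, Nat.cast_pow, ← prod_pow]
  rw [← prod_mul_distrib]
  exact prod_congr rfl fun p hp =>
    sigma1_mul_totient_prime_pow (Nat.prime_of_mem_primeFactors hp) (Finsupp.mem_support_iff.mp hp)

theorem one_sub_one_div_pow_mem_Icc {x : ℝ} (hx : 1 ≤ x) (k : ℕ) :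
    1 - 1 / x ^ k ∈ Set.Icc 0 1 := by
  have : 0 < 1 / x ^ k := by positivity
  have : 1 / x ^ k ≤ 1 := div_le_one_of_le₀ (one_le_pow₀ hx) (by positivity)
  constructor <;> linarith

theorem sigma1_mul_totient_le_sq (n : ℕ) : sigma1 n * n.totient ≤ n ^ 2 := by
  rcases eq_or_ne n 0 with rfl | hn
  · simp [sigma1]
  have hIcc (q) (hq : q ∈ n.primeFactors) :=
    one_sub_one_div_pow_mem_Icc (Nat.one_le_cast.mpr (Nat.pos_of_mem_primeFactors hq))
      (n.factorization q + 1)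
  suffices ((sigma1 n * n.totient : ℕ) : ℝ) ≤ (n : ℝ) ^ 2 by exact_mod_cast this
  rw [sigma1_mul_totient_eq_prod hn]
  exact mul_le_of_le_one_right (by positivity)
    (prod_le_one (fun q hq => (hIcc q hq).1) fun q hq => (hIcc q hq).2)

theorem sigma1_mul_totient_le {n p : ℕ} (hp : p ∈ n.primeFactors) :
    ((sigma1 n * n.totient : ℕ) : ℝ) ≤
      (n : ℝ) ^ 2 * (1 - 1 / (p : ℝ) ^ (n.factorization p + 1)) := by
  have hIcc (q) (hq : q ∈ n.primeFactors) :=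
    one_sub_one_div_pow_mem_Icc (Nat.one_le_cast.mpr (Nat.pos_of_mem_primeFactors hq))
      (n.factorization q + 1)
  rw [sigma1_mul_totient_eq_prod (Nat.mem_primeFactors.1 hp).2.2, ← mul_prod_erase _ _ hp]
  gcongr
  exact mul_le_of_le_one_right (hIcc p hp).1
    (prod_le_one (fun q hq => (hIcc q (mem_of_mem_erase hq)).1)
      fun q hq => (hIcc q (mem_of_mem_erase hq)).2)

theorem two_mul_totient_le_of_two_mul_le_sigma1 {n : ℕ} (hnd : 2 * n ≤ sigma1 n) :
    2 * n.totient ≤ n := by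
  rcases Nat.eq_zero_or_pos n with rfl | hn
  · simp
  refine Nat.le_of_mul_le_mul_left ?_ hn
  calc n * (2 * n.totient) = 2 * n * n.totient := by ring
    _ ≤ sigma1 n * n.totient := Nat.mul_le_mul_right _ hnd
    _ ≤ n ^ 2 := sigma1_mul_totient_le_sq n
    _ = n * n := sq n

theorem two_div_le_S {n p : ℕ} (hnd : 2 * n ≤ sigma1 n) (hp : p ∈ n.primeFactors) :
    2 / (p : ℝ) ^ (n.factorization p + 1) ≤ S n := by
  have hle := sigma1_mul_totient_le hp
  have hx := one_sub_one_div_pow_mem_Icc (Nat.one_le_cast.mpr (Nat.pos_of_mem_primeFactors hp))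
    (n.factorization p + 1)
  set x := 1 - 1 / (p : ℝ) ^ (n.factorization p + 1)
  have hn : 0 < n := Nat.pos_of_ne_zero (Nat.mem_primeFactors.1 hp).2.2
  have hnR : (0 : ℝ) < n := by exact_mod_cast hn
  have hφ : (0 : ℝ) < n.totient := by exact_mod_cast Nat.totient_pos.mpr hn
  have hnd' : 2 * (n : ℝ) * n.totient ≤ sigma1 n * n.totient := by
    gcongr; exact_mod_cast hnd
  push_cast at hle
  have hHx : 2 ≤ H n * x := by
    rw [H, div_mul_eq_mul_div, le_div_iff₀ hφ]
    refine le_of_mul_le_mul_left ?_ hnR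
    nlinarith
  have hH : 0 ≤ H n := by unfold H; positivity
  calc 2 / (p : ℝ) ^ (n.factorization p + 1)
      ≤ H n * (1 - x) := by
        rw [sub_sub_cancel, mul_one_div]
        gcongr
        exact hHx.trans (mul_le_of_le_one_right hH hx.2)
    _ ≤ S n := by rw [S]; linarith

theorem mul_lt_two_mul_sub_one_mul_sub_one {a b : ℕ} (ha : Odd a) (hb : Odd b) (ha1 : 1 < a)
    (hb1 : 1 < b) (hab : a ≠ b) : a * b < 2 * ((a - 1) * (b - 1)) := by
  wlog hlt : a < b generalizing a b
  · rw [mul_comm a, mul_comm (a - 1)]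
    exact this hb ha hb1 ha1 hab.symm (by omega)
  rw [Nat.odd_iff] at ha hb
  obtain ⟨x, rfl⟩ : ∃ x, a = x + 1 := ⟨a - 1, by omega⟩
  obtain ⟨y, rfl⟩ : ∃ y, b = y + 1 := ⟨b - 1, by omega⟩
  have hx : 2 ≤ x := by omega
  have hy : x + 2 ≤ y := by omega
  simp only [Nat.add_sub_cancel]
  nlinarith

theorem mul_mul_le_225_of_lt_of_lt {a b c : ℕ} (ha : Odd a) (hb : Odd b) (hc : Odd c)
    (ha1 : 1 < a) (hab : a < b) (hbc : b < c)
    (h : 2 * ((a - 1) * ((b - 1) * (c - 1))) ≤ a * (b * c)) :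
    a * (b * c) ≤ 225 := by
  rw [Nat.odd_iff] at ha hb hc
  obtain ⟨x, rfl⟩ : ∃ x, a = x + 1 := ⟨a - 1, by omega⟩
  obtain ⟨y, rfl⟩ : ∃ y, b = y + 1 := ⟨b - 1, by omega⟩
  obtain ⟨z, rfl⟩ : ∃ z, c = z + 1 := ⟨c - 1, by omega⟩
  simp only [Nat.add_sub_cancel] at h
  have hy : x + 2 ≤ y := by omega
  have hz : y + 2 ≤ z := by omega
  obtain rfl | hx : x = 2 ∨ 4 ≤ x := by omega
  · obtain rfl | hy : y = 4 ∨ 6 ≤ y := by omega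
    · have : z ≤ 14 := by omega
      omega
    · nlinarith
  · obtain ⟨u, rfl⟩ : ∃ u, x = u + 4 := ⟨x - 4, by omega⟩
    obtain ⟨v, rfl⟩ : ∃ v, y = v + 6 := ⟨y - 6, by omega⟩
    obtain ⟨w, rfl⟩ : ∃ w, z = w + 8 := ⟨z - 8, by omega⟩
    nlinarith [Nat.zero_le (u * v * w), Nat.zero_le (u * v), Nat.zero_le (u * w),
      Nat.zero_le (v * w)]

theorem mul_mul_le_225 {a b c : ℕ} (ha : Odd a) (hb : Odd b) (hc : Odd c)
    (ha1 : 1 < a) (hb1 : 1 < b) (hc1 : 1 < c) (hab : a ≠ b) (hac : a ≠ c) (hbc : b ≠ c)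
    (h : 2 * ((a - 1) * ((b - 1) * (c - 1))) ≤ a * (b * c)) : a * (b * c) ≤ 225 := by
  wlog hlt : a < b generalizing a b
  · have := this hb ha hb1 ha1 hab.symm hbc hac (by convert h using 1 <;> ring) (by omega)
    linarith
  rcases lt_trichotomy b c with hbc' | rfl | hcb
  · exact mul_mul_le_225_of_lt_of_lt ha hb hc ha1 hlt hbc' h
  · exact absurd rfl hbc
  rcases lt_or_gt_of_ne hac with hac' | hca
  · have := mul_mul_le_225_of_lt_of_lt ha hc hb ha1 hac' hcb (by convert h using 1 <;> ring)
    linarith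
  · have := mul_mul_le_225_of_lt_of_lt hc ha hb hc1 hca hlt (by convert h using 1 <;> ring)
    linarith

theorem prod_lt_two_mul_prod_sub_one {s : Finset ℕ} (hs : ∀ a ∈ s, Odd a ∧ 1 < a)
    (hcard : #s ≤ 2) : ∏ a ∈ s, a < 2 * ∏ a ∈ s, (a - 1) := by
  obtain h0 | h1 | h2 : #s = 0 ∨ #s = 1 ∨ #s = 2 := by omega
  · simp [card_eq_zero.mp h0]
  · obtain ⟨a, rfl⟩ := card_eq_one.mp h1
    have ha := hs a (mem_singleton_self a)
    rw [Nat.odd_iff] at ha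
    simp only [prod_singleton]
    omega
  · obtain ⟨a, b, hab, rfl⟩ := card_eq_two.mp h2
    have ha := hs a (by simp)
    have hb := hs b (by simp)
    rw [prod_pair hab, prod_pair hab]
    exact mul_lt_two_mul_sub_one_mul_sub_one ha.1 hb.1 ha.2 hb.2 hab

theorem prod_le_225_of_card_eq_three {s : Finset ℕ} (hs : ∀ a ∈ s, Odd a ∧ 1 < a)
    (hcard : #s = 3)
    (h : 2 * ∏ a ∈ s, (a - 1) ≤ ∏ a ∈ s, a) : ∏ a ∈ s, a ≤ 225 := by
  obtain ⟨a, b, c, hab, hac, hbc, rfl⟩ := card_eq_three.mp hcard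
  have ha := hs a (by simp)
  have hb := hs b (by simp)
  have hc := hs c (by simp)
  have ha_notMem : a ∉ ({b, c} : Finset ℕ) := by simp [hab, hac]
  simp only [prod_insert ha_notMem, prod_pair hbc] at h ⊢
  exact mul_mul_le_225 ha.1 hb.1 hc.1 ha.2 hb.2 hc.2 hab hac hbc h

theorem prod_primeFactors_pow_succ_factorization {n : ℕ} (hn : n ≠ 0) :
    ∏ p ∈ n.primeFactors, p ^ (n.factorization p + 1) = n * ∏ p ∈ n.primeFactors, p := by
  simp only [pow_succ, prod_mul_distrib, ← Nat.prod_primeFactors_pow_factorization hn]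

theorem two_mul_prod_sub_one_le_prod {n : ℕ} (hn : n ≠ 0) (h : 2 * n.totient ≤ n) :
    2 * ∏ p ∈ n.primeFactors, (p - 1) ≤ ∏ p ∈ n.primeFactors, p := by
  refine Nat.le_of_mul_le_mul_left ?_ (Nat.pos_of_ne_zero hn)
  calc n * (2 * ∏ p ∈ n.primeFactors, (p - 1))
      = 2 * n.totient * ∏ p ∈ n.primeFactors, p := by
        rw [mul_assoc, Nat.totient_mul_prod_primeFactors]; ring
    _ ≤ n * ∏ p ∈ n.primeFactors, p := Nat.mul_le_mul_right _ h

theorem exists_prime_pow_succ_sq_lt {n : ℕ} (hodd : Odd n) (h : 2 * n.totient ≤ n) :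
    ∃ p ∈ n.primeFactors, 9 * (p ^ (n.factorization p + 1)) ^ 2 < 100 * n := by
  by_contra! hbig
  have hn : 0 < n := hodd.pos
  set k := #n.primeFactors
  set R := ∏ p ∈ n.primeFactors, p
  have hR : R ≤ n := Nat.le_of_dvd hn (Nat.prod_primeFactors_dvd n)
  have hodd_prime : ∀ p ∈ n.primeFactors, Odd p ∧ 1 < p := fun p hp =>
    ⟨hodd.of_dvd_nat (Nat.dvd_of_mem_primeFactors hp),
      (Nat.prime_of_mem_primeFactors hp).one_lt⟩
  have hrad := two_mul_prod_sub_one_le_prod hn.ne' h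
  have hpow : (100 * n) ^ k ≤ 9 ^ k * (n * R) ^ 2 :=
    calc (100 * n) ^ k = ∏ _p ∈ n.primeFactors, 100 * n := (prod_const _).symm
      _ ≤ ∏ p ∈ n.primeFactors, 9 * (p ^ (n.factorization p + 1)) ^ 2 := prod_le_prod' hbig
      _ = 9 ^ k * (n * R) ^ 2 := by
        rw [prod_mul_distrib, prod_const, prod_pow, prod_primeFactors_pow_succ_factorization hn.ne']
  obtain hk | hk | hk : k ≤ 2 ∨ k = 3 ∨ 4 ≤ k := by omega
  · exact (prod_lt_two_mul_prod_sub_one hodd_prime hk).not_ge hrad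
  · have hR225 : R ≤ 225 := prod_le_225_of_card_eq_three hodd_prime hk hrad
    have hR2 : R ^ 2 ≤ 225 * n := by nlinarith
    have hcube : 100 ^ 3 * n ^ 3 ≤ 729 * 225 * n ^ 3 :=
      calc 100 ^ 3 * n ^ 3 = (100 * n) ^ k := by rw [hk]; ring
        _ ≤ 9 ^ k * (n * R) ^ 2 := hpow
        _ = 729 * n ^ 2 * R ^ 2 := by rw [hk]; ring
        _ ≤ 729 * n ^ 2 * (225 * n) := by gcongr
        _ = 729 * 225 * n ^ 3 := by ring
    have := Nat.le_of_mul_le_mul_right hcube (pow_pos hn 3)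
    norm_num at this
  · refine hpow.not_gt ?_
    calc 9 ^ k * (n * R) ^ 2 ≤ 9 ^ k * n ^ k := by
          refine Nat.mul_le_mul_left _ ?_
          calc (n * R) ^ 2 ≤ (n * n) ^ 2 := by gcongr
            _ = n ^ 4 := by ring
            _ ≤ n ^ k := Nat.pow_le_pow_right hn hk
      _ < (100 * n) ^ k := by
          rw [mul_pow]
          gcongr
          norm_num

theorem three_div_five_mul_sqrt_lt_two_div {x P : ℝ} (hP : 0 < P) (h : 9 * P ^ 2 < 100 * x) :
    3 / (5 * √x) < 2 / P := by
  have hsqrt : 3 * P / 10 < √x := (Real.lt_sqrt (by positivity)).mpr (by nlinarith)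
  rw [div_lt_div_iff₀ (by linarith) hP]
  linarith

theorem surplus_lower_bound_odd_nondeficient_general (n : ℕ) (hodd : Odd n)
    (hnondef : 2 * n ≤ sigma1 n) :
    S n > 3 / (5 * Real.sqrt n) := by
  obtain ⟨p, hp, hsmall⟩ :=
    exists_prime_pow_succ_sq_lt hodd (two_mul_totient_le_of_two_mul_le_sigma1 hnondef)
  refine lt_of_lt_of_le (three_div_five_mul_sqrt_lt_two_div ?_ ?_) (two_div_le_S hnondef hp)
  · exact pow_pos (Nat.cast_pos.mpr (Nat.pos_of_mem_primeFactors hp)) _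
  · exact_mod_cast hsmall

theorem surplus_lower_bound_odd_nondeficient (n : ℕ) (hn : 0 < n) (hodd : Odd n)
    (hnondef : 2 * n ≤ sigma1 n) :
    S n > 3 / (5 * Real.sqrt n) :=
  surplus_lower_bound_odd_nondeficient_general n hodd hnondef
end

section
/- If n is an odd non-deficient number with exactly k distinct prime factors, then H(n) ≥ 2 + (4/3)·n^(−2/k). -/
open Finset

theorem Finset.one_add_sum_le_prod_one_add {ι R : Type*} [CommSemiring R] [PartialOrder R]
    [IsOrderedRing R] (s : Finset ι) {f : ι → R} (hf : ∀ i ∈ s, 0 ≤ f i) :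
    1 + ∑ i ∈ s, f i ≤ ∏ i ∈ s, (1 + f i) := by
  induction s using Finset.cons_induction with
  | empty => simp
  | cons a s _ ih =>
    rw [sum_cons, prod_cons]
    have hfa : 0 ≤ f a := hf a (mem_cons_self a s)
    have hfs : ∀ i ∈ s, 0 ≤ f i := fun i hi ↦ hf i (mem_cons_of_mem hi)
    calc 1 + (f a + ∑ i ∈ s, f i) ≤ 1 + (f a + ∑ i ∈ s, f i) + f a * ∑ i ∈ s, f i :=
          le_add_of_nonneg_right (mul_nonneg hfa (sum_nonneg hfs))
      _ = (1 + f a) * (1 + ∑ i ∈ s, f i) := by ring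
      _ ≤ (1 + f a) * ∏ i ∈ s, (1 + f i) :=
        mul_le_mul_of_nonneg_left (ih hfs) (add_nonneg zero_le_one hfa)

theorem Real.card_mul_prod_rpow_inv_card_le_sum {ι : Type*} (s : Finset ι) {z : ι → ℝ}
    (hz : ∀ i ∈ s, 0 ≤ z i) : #s * (∏ i ∈ s, z i) ^ (#s : ℝ)⁻¹ ≤ ∑ i ∈ s, z i := by
  rcases s.eq_empty_or_nonempty with rfl | hs
  · simp
  have hcard : (0 : ℝ) < #s := by exact_mod_cast hs.card_pos
  have := Real.geom_mean_le_arith_mean s (fun _ ↦ 1) z (fun _ _ ↦ zero_le_one)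
    (by simpa using hcard) hz
  simp only [Real.rpow_one, sum_const, nsmul_eq_mul, mul_one, one_mul] at this
  rwa [le_div_iff₀ hcard, mul_comm] at this

namespace Nat

theorem prod_primeFactors_pow_succ_factorization {n : ℕ} (hn : n ≠ 0) :
    ∏ p ∈ n.primeFactors, p ^ (n.factorization p + 1) = n * ∏ p ∈ n.primeFactors, p := by
  simp only [pow_succ, prod_mul_distrib]
  congr 1
  exact prod_factorization_pow_eq_self hn

theorem prod_primeFactors_pow_succ_factorization_le_sq {n : ℕ} (hn : n ≠ 0) :
    ∏ p ∈ n.primeFactors, p ^ (n.factorization p + 1) ≤ n ^ 2 := by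
  rw [prod_primeFactors_pow_succ_factorization hn, sq]
  exact Nat.mul_le_mul_left n (Nat.le_of_dvd (Nat.pos_of_ne_zero hn) (prod_primeFactors_dvd n))

end Nat

section

variable {n : ℕ}

theorem H_eq_prod_primeFactors (hn : n ≠ 0) :
    H n = ∏ p ∈ n.primeFactors, (1 - (p : ℝ)⁻¹)⁻¹ := by
  have hφ : (n.totient : ℝ) = n * ∏ p ∈ n.primeFactors, (1 - (p : ℝ)⁻¹) := by
    have h := congrArg (Rat.cast : ℚ → ℝ) (Nat.totient_eq_mul_prod_factors n)
    push_cast at h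
    exact h
  have hn' : (n : ℝ) ≠ 0 := by exact_mod_cast hn
  rw [H, hφ, prod_inv_distrib, div_mul_eq_div_div, div_self hn', one_div]

theorem sigma1_div_self_eq_H_mul_prod (hn : n ≠ 0) :
    (sigma1 n : ℝ) / n =
      H n * ∏ p ∈ n.primeFactors, (1 - ((p : ℝ) ^ (n.factorization p + 1))⁻¹) := by
  have hn' : (n : ℝ) = ∏ p ∈ n.primeFactors, (p : ℝ) ^ n.factorization p := by
    exact_mod_cast (Nat.prod_factorization_pow_eq_self hn).symm
  rw [sigma1, Nat.sum_divisors hn, hn', H_eq_prod_primeFactors hn]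
  push_cast
  rw [← prod_div_distrib, ← prod_mul_distrib]
  refine prod_congr rfl fun p hp ↦ ?_
  have hp : (1 : ℝ) < p := by exact_mod_cast (Nat.prime_of_mem_primeFactors hp).one_lt
  rw [geom_sum_eq hp.ne']
  field_simp
  ring

theorem H_nonneg : 0 ≤ H n := div_nonneg n.cast_nonneg n.totient.cast_nonneg

theorem two_mul_prod_one_add_inv_le_H (hn : n ≠ 0) (hnondef : 2 * n ≤ sigma1 n) :
    2 * ∏ p ∈ n.primeFactors, (1 + ((p : ℝ) ^ (n.factorization p + 1))⁻¹) ≤ H n := by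
  set x : ℕ → ℝ := fun p ↦ ((p : ℝ) ^ (n.factorization p + 1))⁻¹
  have hx : ∀ p ∈ n.primeFactors, 0 ≤ x p ∧ x p ≤ 1 := fun p hp ↦
    have hp : (1 : ℝ) ≤ p := by exact_mod_cast (Nat.prime_of_mem_primeFactors hp).one_le
    ⟨by positivity, inv_le_one_of_one_le₀ (one_le_pow₀ hp)⟩
  have hsigma : 2 ≤ H n * ∏ p ∈ n.primeFactors, (1 - x p) := by
    rw [← sigma1_div_self_eq_H_mul_prod hn, le_div_iff₀ (by positivity)]
    exact_mod_cast hnondef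
  calc 2 * ∏ p ∈ n.primeFactors, (1 + x p)
      ≤ H n * (∏ p ∈ n.primeFactors, (1 - x p)) * ∏ p ∈ n.primeFactors, (1 + x p) :=
        mul_le_mul_of_nonneg_right hsigma
          (prod_nonneg fun p hp ↦ add_nonneg zero_le_one (hx p hp).1)
    _ = H n * ∏ p ∈ n.primeFactors, (1 - x p ^ 2) := by
        rw [mul_assoc, ← prod_mul_distrib]
        congr 1
        exact prod_congr rfl fun p _ ↦ by ring
    _ ≤ H n := by
        refine mul_le_of_le_one_right H_nonneg (prod_le_one (fun p hp ↦ ?_) fun p hp ↦ ?_)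
        · nlinarith [hx p hp]
        · exact sub_le_self 1 (sq_nonneg (x p))

theorem two_add_two_mul_card_mul_rpow_le_H (hn : n ≠ 0) (hnondef : 2 * n ≤ sigma1 n) :
    2 + 2 * #n.primeFactors * (n : ℝ) ^ (-(2 / (#n.primeFactors : ℝ))) ≤ H n := by
  set k := #n.primeFactors
  set x : ℕ → ℝ := fun p ↦ ((p : ℝ) ^ (n.factorization p + 1))⁻¹
  have hx : ∀ p ∈ n.primeFactors, 0 ≤ x p := fun p _ ↦ by positivity
  have hn2 : ((n : ℝ) ^ 2)⁻¹ ≤ ∏ p ∈ n.primeFactors, x p := by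
    rw [prod_inv_distrib]
    refine inv_anti₀ (prod_pos fun p hp ↦ ?_) ?_
    · exact_mod_cast pow_pos (Nat.pos_of_mem_primeFactors hp) _
    · exact_mod_cast Nat.prod_primeFactors_pow_succ_factorization_le_sq hn
  have hgeom : (n : ℝ) ^ (-(2 / (k : ℝ))) ≤ (∏ p ∈ n.primeFactors, x p) ^ (k : ℝ)⁻¹ := by
    calc (n : ℝ) ^ (-(2 / (k : ℝ))) = (((n : ℝ) ^ 2)⁻¹) ^ (k : ℝ)⁻¹ := by
          rw [Real.inv_rpow (by positivity), ← Real.rpow_natCast, ← Real.rpow_mul (by positivity),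
            Real.rpow_neg (by positivity), Nat.cast_two, div_eq_mul_inv]
      _ ≤ _ := Real.rpow_le_rpow (by positivity) hn2 (by positivity)
  calc 2 + 2 * k * (n : ℝ) ^ (-(2 / (k : ℝ)))
      ≤ 2 * (1 + k * (∏ p ∈ n.primeFactors, x p) ^ (k : ℝ)⁻¹) := by
        linarith [mul_le_mul_of_nonneg_left hgeom (Nat.cast_nonneg (α := ℝ) k)]
    _ ≤ 2 * (1 + ∑ p ∈ n.primeFactors, x p) := by
        gcongr
        exact Real.card_mul_prod_rpow_inv_card_le_sum _ hx
    _ ≤ 2 * ∏ p ∈ n.primeFactors, (1 + x p) := by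
        gcongr
        exact one_add_sum_le_prod_one_add _ hx
    _ ≤ H n := two_mul_prod_one_add_inv_le_H hn hnondef

end

theorem H_lower_bound_odd_nondeficient_general (n : ℕ) (hn : 0 < n)
    (hnondef : 2 * n ≤ sigma1 n) (k : ℕ) (hk : k = n.primeFactors.card) :
    H n ≥ 2 + (4 / 3) * (n : ℝ) ^ (-(2 / (k : ℝ))) := by
  have hn1 : n ≠ 1 := by
    rintro rfl
    simp [sigma1] at hnondef
  have hk1 : (1 : ℝ) ≤ k := by
    rw [hk]
    exact_mod_cast (Nat.nonempty_primeFactors.2 (by omega)).card_pos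
  have hbound := two_add_two_mul_card_mul_rpow_le_H hn.ne' hnondef
  rw [← hk] at hbound
  have hpow : 0 ≤ (n : ℝ) ^ (-(2 / (k : ℝ))) := by positivity
  nlinarith

theorem H_lower_bound_odd_nondeficient (n : ℕ) (hn : 0 < n) (hodd : Odd n)
    (hnondef : 2 * n ≤ sigma1 n) (k : ℕ) (hk : k = n.primeFactors.card) :
    H n ≥ 2 + (4 / 3) * (n : ℝ) ^ (-(2 / (k : ℝ))) :=
  H_lower_bound_odd_nondeficient_general n hn hnondef k hk
end

section
/- Let n = p₁^{a₁}·p₂^{a₂}···p_k^{a_k} be a primitive non-deficient number, where p₁ < p₂ < ··· < p_k are primes and each aᵢ ≥ 1, and let R = p₁·p₂···p_k be the radical of n. Then there exists an index i with 1 ≤ i ≤ k such that pᵢ^{aᵢ+1} < 2·k·R. -/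
/-!
Suppose that `p ^ (a_p + 1) ≥ 2kR` for every prime `p ∣ n`, and put `φ = ∏ (p - 1)`.
Since `φ σ(n) = ∏ (p ^ (a_p + 1) - 1)` and `n R = ∏ p ^ (a_p + 1)`, non-deficiency gives
`2φ < R`, while the Weierstrass product inequality gives
`φ σ(n) ≥ n R (1 - ∑ p ^ -(a_p + 1)) ≥ n R - n / 2`.
As `R / φ = ∏ p / (p - 1)` is at most `(q - 1 + k) / (q - 1)` for the least prime factor `q`,
`2φ < R` forces `q ≤ k`. Finally, the deficiency of `n / q` bounds `σ(n) / n` above by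
`2 (X - 1) / (X - q)` with `X = q ^ (a_q + 1)`; against the lower bound `(2R - 1) / (2φ)` this
gives `X < 2qR ≤ 2kR`.
-/

open Finset

lemma sub_one_mul_geom_sum_add_one {x : ℕ} (hx : 1 ≤ x) (c : ℕ) :
    (x - 1) * ∑ i ∈ range c, x ^ i + 1 = x ^ c := by
  obtain ⟨y, rfl⟩ := Nat.exists_eq_add_of_le' hx
  simpa [mul_comm] using geom_sum_mul_add y c

lemma prod_sub_one_mul_sigma1 {n : ℕ} (hn : n ≠ 0) :
    (∏ p ∈ n.primeFactors, (p - 1)) * sigma1 n =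
      ∏ p ∈ n.primeFactors, (p ^ (n.factorization p + 1) - 1) := by
  rw [sigma1, Nat.sum_divisors hn, ← prod_mul_distrib]
  refine prod_congr rfl fun p hp => ?_
  have := sub_one_mul_geom_sum_add_one (Nat.prime_of_mem_primeFactors hp).one_le
    (n.factorization p + 1)
  omega

lemma mul_prod_primeFactors {n : ℕ} (hn : n ≠ 0) :
    n * ∏ p ∈ n.primeFactors, p = ∏ p ∈ n.primeFactors, p ^ (n.factorization p + 1) := by
  nth_rw 1 [Nat.prod_primeFactors_pow_factorization hn]
  simp only [← prod_mul_distrib, pow_succ]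

lemma two_mul_prod_sub_one_lt_prod {n : ℕ} (hn : 1 < n) (h : 2 * n ≤ sigma1 n) :
    2 * ∏ p ∈ n.primeFactors, (p - 1) < ∏ p ∈ n.primeFactors, p := by
  have hn0 : n ≠ 0 := by omega
  have hlt : (∏ p ∈ n.primeFactors, (p - 1)) * sigma1 n < n * ∏ p ∈ n.primeFactors, p := by
    rw [prod_sub_one_mul_sigma1 hn0, mul_prod_primeFactors hn0]
    refine prod_lt_prod_of_nonempty (fun p hp => ?_) (fun p hp => ?_)
      (Nat.nonempty_primeFactors.2 hn)
    all_goals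
      have := Nat.one_lt_pow (Nat.add_one_ne_zero (n.factorization p))
        (Nat.prime_of_mem_primeFactors hp).one_lt
      omega
  refine Nat.lt_of_mul_lt_mul_left (a := n) (lt_of_le_of_lt ?_ hlt)
  calc n * (2 * ∏ p ∈ n.primeFactors, (p - 1))
        = (∏ p ∈ n.primeFactors, (p - 1)) * (2 * n) := by ring
    _ ≤ _ := Nat.mul_le_mul_left _ h

theorem one_sub_sum_le_prod_one_sub {ι R : Type*} [CommRing R] [LinearOrder R]
    [IsStrictOrderedRing R] (s : Finset ι) {f : ι → R} (h0 : ∀ i ∈ s, 0 ≤ f i)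
    (h1 : ∀ i ∈ s, f i ≤ 1) : 1 - ∑ i ∈ s, f i ≤ ∏ i ∈ s, (1 - f i) := by
  classical
  induction s using Finset.induction_on with
  | empty => simp
  | insert x s hx ih =>
    rw [sum_insert hx, prod_insert hx]
    have ih := ih (fun i hi => h0 i (mem_insert_of_mem hi)) fun i hi => h1 i (mem_insert_of_mem hi)
    have hsum : 0 ≤ ∑ i ∈ s, f i := sum_nonneg fun i hi => h0 i (mem_insert_of_mem hi)
    have hfx : 0 ≤ 1 - f x := sub_nonneg.2 (h1 x (mem_insert_self x s))
    nlinarith [mul_le_mul_of_nonneg_left ih hfx, mul_nonneg (h0 x (mem_insert_self x s)) hsum]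

lemma mul_prod_le_mul_prod_sub_one (c : ℕ) (S : Finset ℕ) (hS : ∀ p ∈ S, c < p) :
    c * ∏ p ∈ S, p ≤ (c + #S) * ∏ p ∈ S, (p - 1) := by
  induction S using Finset.induction_on_max with
  | empty => simp
  | insert M S hlt ih =>
    have hM : M ∉ S := fun h => (hlt M h).false
    have ih := ih fun p hp => hS p (mem_insert_of_mem hp)
    -- `insert M S` consists of `#S + 1` distinct numbers in `(c, M]`
    have hcard : c + #S + 1 ≤ M := by
      have hsub : insert M S ⊆ Ioc c M := fun x hx => by
        rcases mem_insert.1 hx with rfl | hx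
        · exact mem_Ioc.2 ⟨hS x (mem_insert_self x S), le_rfl⟩
        · exact mem_Ioc.2 ⟨hS x (mem_insert_of_mem hx), (hlt x hx).le⟩
      have := card_le_card hsub
      rw [Nat.card_Ioc, card_insert_of_notMem hM] at this
      omega
    rw [prod_insert hM, prod_insert hM, card_insert_of_notMem hM]
    obtain ⟨M, rfl⟩ : ∃ M', M = M' + 1 := ⟨M - 1, by omega⟩
    rw [Nat.add_sub_cancel]
    calc c * ((M + 1) * ∏ p ∈ S, p) = (M + 1) * (c * ∏ p ∈ S, p) := by ring
      _ ≤ (M + 1) * ((c + #S) * ∏ p ∈ S, (p - 1)) := Nat.mul_le_mul_left _ ih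
      _ ≤ (c + (#S + 1)) * (M * ∏ p ∈ S, (p - 1)) := by
        rw [← mul_assoc, ← mul_assoc]
        exact Nat.mul_le_mul_right _ (by nlinarith)

lemma minFac_le_card_primeFactors {n : ℕ}
    (h : 2 * ∏ p ∈ n.primeFactors, (p - 1) < ∏ p ∈ n.primeFactors, p) :
    n.minFac ≤ #n.primeFactors := by
  have hq : 2 ≤ n.minFac := (Nat.minFac_prime fun hn => by simp [hn] at h).two_le
  have hsorted := mul_prod_le_mul_prod_sub_one (n.minFac - 1) n.primeFactors fun p hp => by
    have := Nat.minFac_le_of_dvd (Nat.prime_of_mem_primeFactors hp).two_le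
      (Nat.dvd_of_mem_primeFactors hp)
    omega
  by_contra! hk
  have : n.minFac - 1 + #n.primeFactors ≤ 2 * (n.minFac - 1) := by omega
  nlinarith [Nat.mul_le_mul_right (∏ p ∈ n.primeFactors, (p - 1)) this,
    Nat.mul_lt_mul_of_pos_left h (show 0 < n.minFac - 1 by omega)]

theorem prod_mul_one_sub_sum_inv_le_prod_sub_one {ι K : Type*} [Field K] [LinearOrder K]
    [IsStrictOrderedRing K] (s : Finset ι) {x : ι → K} (hx : ∀ i ∈ s, 1 ≤ x i) :
    (∏ i ∈ s, x i) * (1 - ∑ i ∈ s, (x i)⁻¹) ≤ ∏ i ∈ s, (x i - 1) := by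
  have hpos : ∀ i ∈ s, 0 < x i := fun i hi => zero_lt_one.trans_le (hx i hi)
  calc (∏ i ∈ s, x i) * (1 - ∑ i ∈ s, (x i)⁻¹)
      ≤ (∏ i ∈ s, x i) * ∏ i ∈ s, (1 - (x i)⁻¹) :=
        mul_le_mul_of_nonneg_left (one_sub_sum_le_prod_one_sub s
          (fun i hi => (inv_pos.2 (hpos i hi)).le) fun i hi => inv_le_one_of_one_le₀ (hx i hi))
          (prod_nonneg fun i hi => (hpos i hi).le)
    _ = ∏ i ∈ s, (x i - 1) := by
        rw [← prod_mul_distrib]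
        refine prod_congr rfl fun i hi => ?_
        rw [mul_sub, mul_one, mul_inv_cancel₀ (hpos i hi).ne']

lemma two_mul_prod_mul_le_of_forall_le_pow {n : ℕ} (hn : n ≠ 0)
    (h : ∀ p ∈ n.primeFactors,
      2 * #n.primeFactors * ∏ p ∈ n.primeFactors, p ≤ p ^ (n.factorization p + 1)) :
    2 * (∏ p ∈ n.primeFactors, p) * n ≤
      2 * ((∏ p ∈ n.primeFactors, (p - 1)) * sigma1 n) + n := by
  set R := ∏ p ∈ n.primeFactors, p
  set k := #n.primeFactors
  have hR : (0 : ℚ) < R := by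
    exact_mod_cast prod_pos fun p hp => (Nat.prime_of_mem_primeFactors hp).pos
  have hX : ∀ p ∈ n.primeFactors, 1 ≤ p ^ (n.factorization p + 1) := fun p hp =>
    Nat.one_le_pow _ _ (Nat.prime_of_mem_primeFactors hp).pos
  have hsum :
      ∑ p ∈ n.primeFactors, ((p ^ (n.factorization p + 1) : ℕ) : ℚ)⁻¹ ≤ (2 * R : ℚ)⁻¹ := by
    rcases Nat.eq_zero_or_pos k with hk | hk
    · rw [card_eq_zero.1 hk, sum_empty]
      positivity
    calc _ ≤ k • (2 * k * R : ℚ)⁻¹ := sum_le_card_nsmul _ _ _ fun p hp =>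
          inv_anti₀ (by positivity) (by exact_mod_cast h p hp)
      _ = (2 * R : ℚ)⁻¹ := by
          rw [nsmul_eq_mul]
          field_simp
  have hweier := prod_mul_one_sub_sum_inv_le_prod_sub_one n.primeFactors
    (x := fun p => ((p ^ (n.factorization p + 1) : ℕ) : ℚ)) fun p hp => by exact_mod_cast hX p hp
  have hprod : ∏ p ∈ n.primeFactors, ((p ^ (n.factorization p + 1) : ℕ) : ℚ) = n * R := by
    exact_mod_cast (mul_prod_primeFactors hn).symm
  have hprod_sub : ∏ p ∈ n.primeFactors, (((p ^ (n.factorization p + 1) : ℕ) : ℚ) - 1) =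
      ((∏ p ∈ n.primeFactors, (p - 1)) * sigma1 n : ℕ) := by
    rw [prod_sub_one_mul_sigma1 hn, Nat.cast_prod]
    exact prod_congr rfl fun p hp => (Nat.cast_sub (hX p hp)).symm
  rw [hprod, hprod_sub] at hweier
  have hdefect :
      (n * R : ℚ) * ∑ p ∈ n.primeFactors, ((p ^ (n.factorization p + 1) : ℕ) : ℚ)⁻¹ ≤ n / 2 := by
    calc _ ≤ (n * R : ℚ) * (2 * R : ℚ)⁻¹ := mul_le_mul_of_nonneg_left hsum (by positivity)
      _ = n / 2 := by field_simp
  have : (2 * R * n : ℚ) ≤ 2 * ((∏ p ∈ n.primeFactors, (p - 1)) * sigma1 n : ℕ) + n := by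
    linarith
  exact_mod_cast this

lemma sub_mul_sigma1_lt_of_sigma1_lt {q b m : ℕ} (hq : q.Prime) (hqm : q.Coprime m)
    (h : sigma1 (q ^ b * m) < 2 * (q ^ b * m)) :
    ((q : ℚ) ^ (b + 2) - q) * sigma1 (q ^ (b + 1) * m) <
      2 * ((q : ℚ) ^ (b + 2) - 1) * (q ^ (b + 1) * m : ℕ) := by
  have hsigma (c : ℕ) :
      (sigma1 (q ^ c * m) : ℚ) = (∑ i ∈ range (c + 1), (q : ℚ) ^ i) * sigma1 m := by
    simp only [sigma1]
    rw [Nat.Coprime.sum_divisors_mul (hqm.pow_left c), Nat.sum_divisors_prime_pow hq]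
    push_cast
    rfl
  have h' : (sigma1 (q ^ b * m) : ℚ) < 2 * (q ^ b * m) := by exact_mod_cast h
  rw [hsigma] at h' ⊢
  have hq1 : (1 : ℚ) < q := by exact_mod_cast hq.one_lt
  have e1 := mul_geom_sum (q : ℚ) (b + 2)
  have e2 := mul_geom_sum (q : ℚ) (b + 1)
  refine lt_of_mul_lt_mul_left ?_ (sub_nonneg.2 hq1.le)
  calc ((q : ℚ) - 1) *
        (((q : ℚ) ^ (b + 2) - q) * ((∑ i ∈ range (b + 1 + 1), (q : ℚ) ^ i) * sigma1 m))
      = ((q : ℚ) ^ (b + 2) - 1) * q * (q - 1) *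
          ((∑ i ∈ range (b + 1), (q : ℚ) ^ i) * sigma1 m) := by
        linear_combination (((q : ℚ) ^ (b + 2) - q) * sigma1 m) * e1
          - (((q : ℚ) ^ (b + 2) - 1) * q * sigma1 m) * e2
    _ < ((q : ℚ) ^ (b + 2) - 1) * q * (q - 1) * (2 * (q ^ b * m)) := by
        refine mul_lt_mul_of_pos_left h' ?_
        have : (1 : ℚ) < (q : ℚ) ^ (b + 2) := one_lt_pow₀ hq1 (by omega)
        have := sub_pos.2 hq1
        positivity
    _ = ((q : ℚ) - 1) * (2 * ((q : ℚ) ^ (b + 2) - 1) * (q ^ (b + 1) * m : ℕ)) := by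
        push_cast; ring

lemma sub_mul_sigma1_lt_of_sigma1_div_lt {n q : ℕ} (hn : n ≠ 0) (hq : q.Prime) (hqn : q ∣ n)
    (h : sigma1 (n / q) < 2 * (n / q)) :
    ((q : ℚ) ^ (n.factorization q + 1) - q) * sigma1 n <
      2 * ((q : ℚ) ^ (n.factorization q + 1) - 1) * n := by
  obtain ⟨b, hb⟩ : ∃ b, n.factorization q = b + 1 :=
    Nat.exists_eq_add_one.2 (hq.factorization_pos_of_dvd hn hqn)
  have hcop := Nat.coprime_ordCompl hq hn
  have hnm := Nat.ordProj_mul_ordCompl_eq_self n q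
  set m := n / q ^ n.factorization q
  rw [hb] at hnm
  have hdiv : n / q = q ^ b * m := by
    rw [← hnm, pow_succ, mul_right_comm, Nat.mul_div_cancel _ hq.pos]
  rw [hdiv] at h
  rw [hb, ← hnm]
  exact sub_mul_sigma1_lt_of_sigma1_lt hq hcop h

lemma minFac_pow_lt_two_mul_minFac_mul_prod {n : ℕ} (hn : 1 < n)
    (hφR : 2 * ∏ p ∈ n.primeFactors, (p - 1) < ∏ p ∈ n.primeFactors, p)
    (hlow : 2 * (∏ p ∈ n.primeFactors, p) * n ≤
      2 * ((∏ p ∈ n.primeFactors, (p - 1)) * sigma1 n) + n)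
    (hdiv : sigma1 (n / n.minFac) < 2 * (n / n.minFac)) :
    n.minFac ^ (n.factorization n.minFac + 1) < 2 * n.minFac * ∏ p ∈ n.primeFactors, p := by
  set q := n.minFac
  set R := ∏ p ∈ n.primeFactors, p
  set φ := ∏ p ∈ n.primeFactors, (p - 1)
  have hq : q.Prime := Nat.minFac_prime hn.ne'
  have hup := sub_mul_sigma1_lt_of_sigma1_div_lt (by omega) hq (Nat.minFac_dvd n) hdiv
  have hXq : (q : ℚ) ≤ (q : ℚ) ^ (n.factorization q + 1) := by
    exact_mod_cast Nat.le_self_pow (Nat.add_one_ne_zero _) q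
  have hq2 : (2 : ℚ) ≤ q := by exact_mod_cast hq.two_le
  have hφR' : (2 * φ + 1 : ℚ) ≤ R := by exact_mod_cast hφR
  have hlow' : (2 * R * n : ℚ) ≤ 2 * (φ * sigma1 n) + n := by exact_mod_cast hlow
  suffices (q : ℚ) ^ (n.factorization q + 1) < 2 * q * R by exact_mod_cast this
  set X := (q : ℚ) ^ (n.factorization q + 1)
  -- compare the lower bound `(2R - 1) / (2φ)` on `σ(n)/n` with the upper bound `2(X-1)/(X-q)`
  have key : (2 * R - 1) * (X - q) * n ≤ ((2 * R - 2) * (X - 1) * n : ℚ) :=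
    calc (2 * R - 1) * (X - q) * n = (X - q) * ((2 * R - 1) * n : ℚ) := by ring
      _ ≤ (X - q) * (2 * (φ * sigma1 n)) :=
          mul_le_mul_of_nonneg_left (by linarith) (sub_nonneg.2 hXq)
      _ = 2 * φ * ((X - q) * sigma1 n) := by ring
      _ ≤ 2 * φ * (2 * (X - 1) * n) := mul_le_mul_of_nonneg_left hup.le (by positivity)
      _ = 4 * φ * ((X - 1) * n) := by ring
      _ ≤ (2 * R - 2) * ((X - 1) * n) :=
          mul_le_mul_of_nonneg_right (by linarith) (mul_nonneg (by linarith) (by positivity))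
      _ = (2 * R - 2) * (X - 1) * n := by ring
  have key' := le_of_mul_le_mul_right key (by exact_mod_cast hn.trans' zero_lt_one)
  nlinarith

theorem exists_prime_power_lt_two_k_R (n : ℕ) (hn : 0 < n)
    (hnondef : 2 * n ≤ sigma1 n)
    (hprim : ∀ d : ℕ, d ∣ n → d < n → sigma1 d < 2 * d)
    (k : ℕ) (hk : k = n.primeFactors.card)
    (R : ℕ) (hR : R = ∏ p ∈ n.primeFactors, p) :
    ∃ p ∈ n.primeFactors, p ^ (n.factorization p + 1) < 2 * k * R := by
  subst hk hR
  have hn1 : 1 < n := by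
    by_contra! h
    obtain rfl : n = 1 := by omega
    simp [sigma1] at hnondef
  have hq : n.minFac.Prime := Nat.minFac_prime hn1.ne'
  have hqn : n.minFac ∣ n := Nat.minFac_dvd n
  have hφR := two_mul_prod_sub_one_lt_prod hn1 hnondef
  by_contra! hbig
  have hlt := minFac_pow_lt_two_mul_minFac_mul_prod hn1 hφR
    (two_mul_prod_mul_le_of_forall_le_pow hn.ne' hbig)
    (hprim _ (Nat.div_dvd_of_dvd hqn) (Nat.div_lt_self hn hq.one_lt))
  have hge := hbig n.minFac (Nat.mem_primeFactors.2 ⟨hq, hqn, hn.ne'⟩)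
  have hqk := minFac_le_card_primeFactors hφR
  have hkR := Nat.mul_le_mul_right (∏ p ∈ n.primeFactors, p) (Nat.mul_le_mul_left 2 hqk)
  omega
end

section
/- The function f(x) = x·log(x/(2(x−1))) is strictly decreasing on the interval (1, ∞); that is, for all real numbers x, y with 1 < x < y, f(y) < f(x). -/
/-!
With `f c x = x log (x / (c (x - 1)))` one finds `f' = log (x / (x - 1)) - log c - 1 / (x - 1)`,
and `log (x / (x - 1)) = log (1 + 1 / (x - 1)) < 1 / (x - 1)`, so `f' < -log c ≤ 0` once `c ≥ 1`.
-/

open Real Set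

lemma log_div_sub_one_lt {x : ℝ} (hx : 1 < x) : log (x / (x - 1)) < 1 / (x - 1) := by
  have hx1 : 0 < x - 1 := by linarith
  have hne : x / (x - 1) ≠ 1 := by
    rw [Ne, div_eq_one_iff_eq hx1.ne']
    linarith
  calc log (x / (x - 1)) < x / (x - 1) - 1 := log_lt_sub_one_of_pos (by positivity) hne
    _ = 1 / (x - 1) := by field_simp; ring

lemma hasDerivAt_mul_log_div_mul_sub_one {c x : ℝ} (hc : c ≠ 0) (hx : 1 < x) :
    HasDerivAt (fun t : ℝ => t * log (t / (c * (t - 1))))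
      (log (x / (c * (x - 1))) - 1 / (x - 1)) x := by
  have hx1 : x - 1 ≠ 0 := by linarith
  have hden : c * (x - 1) ≠ 0 := mul_ne_zero hc hx1
  have hquot : HasDerivAt (fun t : ℝ => t / (c * (t - 1)))
      ((1 * (c * (x - 1)) - x * (c * 1)) / (c * (x - 1)) ^ 2) x :=
    (hasDerivAt_id x).div (((hasDerivAt_id x).sub_const 1).const_mul c) hden
  have hx0 : x ≠ 0 := by linarith
  refine ((hasDerivAt_id x).mul (hquot.log (div_ne_zero hx0 hden))).congr_deriv ?_
  simp only [id_eq]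
  field_simp
  ring

lemma strictAntiOn_mul_log_div_mul_sub_one {c : ℝ} (hc : 1 ≤ c) :
    StrictAntiOn (fun x : ℝ => x * log (x / (c * (x - 1)))) (Ioi 1) := by
  have hderiv : ∀ x ∈ Ioi (1 : ℝ), HasDerivAt (fun t : ℝ => t * log (t / (c * (t - 1))))
      (log (x / (c * (x - 1))) - 1 / (x - 1)) x :=
    fun x hx => hasDerivAt_mul_log_div_mul_sub_one (by positivity) hx
  refine strictAntiOn_of_hasDerivWithinAt_neg (convex_Ioi 1)
    (fun x hx => (hderiv x hx).continuousAt.continuousWithinAt)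
    (fun x hx => (hderiv x (interior_subset hx)).hasDerivWithinAt) fun x hx => ?_
  rw [interior_Ioi] at hx
  have hx1 : 0 < x - 1 := sub_pos.mpr hx
  have hx0 : 0 < x := by linarith
  have hsplit : log (x / (c * (x - 1))) = log (x / (x - 1)) - log c := by
    rw [mul_comm, ← div_div, log_div (by positivity) (by positivity)]
  linarith [log_div_sub_one_lt hx, log_nonneg hc]

theorem xlog_strictly_decreasing (x y : ℝ) (hx : 1 < x) (hxy : x < y) :
    y * Real.log (y / (2 * (y - 1))) < x * Real.log (x / (2 * (x - 1))) :=
  strictAntiOn_mul_log_div_mul_sub_one one_le_two hx (hx.trans hxy) hxy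
end

section
/- Let n be a non-deficient number with smallest prime factor p and with exactly k distinct prime factors. Then k ≥ p. -/
open Finset ArithmeticFunction
open scoped ArithmeticFunction.sigma

theorem sigma_one_prime_pow_mul_sub_one_lt {q : ℕ} (hq : q.Prime) (a : ℕ) :
    σ 1 (q ^ a) * (q - 1) < q ^ a * q := by
  obtain ⟨r, rfl⟩ : ∃ r, q = r + 1 := ⟨q - 1, by have := hq.one_le; omega⟩
  have hgeom := geom_sum_mul_add r (a + 1)
  rw [sigma_one_apply_prime_pow hq, Nat.add_sub_cancel, ← pow_succ]
  omega

theorem sigma_one_mul_prod_sub_one_lt {n : ℕ} (hn : 1 < n) :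
    σ 1 n * ∏ q ∈ n.primeFactors, (q - 1) < n * ∏ q ∈ n.primeFactors, q := by
  have hn0 : n ≠ 0 := by omega
  conv_rhs => enter [1]; rw [Nat.prod_primeFactors_pow_factorization hn0]
  rw [isMultiplicative_sigma.multiplicative_factorization _ hn0,
    Nat.prod_factorization_eq_prod_primeFactors, ← prod_mul_distrib, ← prod_mul_distrib]
  refine prod_lt_prod_of_nonempty (fun q hq ↦ ?_) (fun q hq ↦ ?_)
    (Nat.nonempty_primeFactors.mpr hn)
  · have hq := Nat.prime_of_mem_primeFactors hq
    exact Nat.mul_pos (sigma_pos _ _ (pow_ne_zero _ hq.ne_zero)) (Nat.sub_pos_of_lt hq.one_lt)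
  · exact sigma_one_prime_pow_mul_sub_one_lt (Nat.prime_of_mem_primeFactors hq) _

theorem mul_prod_le_add_card_mul_prod_sub_one {S : Finset ℕ} {m : ℕ} (hm : ∀ q ∈ S, m < q) :
    m * ∏ q ∈ S, q ≤ (m + #S) * ∏ q ∈ S, (q - 1) := by
  induction S using Finset.induction_on_min generalizing m with
  | empty => simp
  | insert a S haS ih =>
    have ha : a ∉ S := fun h ↦ lt_irrefl a (haS a h)
    have hma : m < a := hm a (mem_insert_self a S)
    have hS := ih haS
    rw [prod_insert ha, prod_insert ha, card_insert_of_notMem ha]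
    obtain ⟨t, rfl⟩ : ∃ t, a = m + 1 + t := ⟨a - (m + 1), by omega⟩
    rw [show m + 1 + t - 1 = m + t by omega]
    -- `m (a + #S) ≤ (m + #S + 1)(a - 1)` because `a ≥ m + 1`
    calc m * ((m + 1 + t) * ∏ q ∈ S, q)
        ≤ m * ((m + 1 + t + #S) * ∏ q ∈ S, (q - 1)) := Nat.mul_le_mul_left m hS
      _ ≤ (m + (#S + 1)) * ((m + t) * ∏ q ∈ S, (q - 1)) := by
        rw [← mul_assoc, ← mul_assoc]
        exact Nat.mul_le_mul_right _ (by nlinarith)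

theorem two_mul_prod_primeFactors_sub_one_lt {n : ℕ} (hn : 1 < n) (h : 2 * n ≤ σ 1 n) :
    2 * ∏ q ∈ n.primeFactors, (q - 1) < ∏ q ∈ n.primeFactors, q := by
  refine Nat.lt_of_mul_lt_mul_left (a := n) ?_
  calc n * (2 * ∏ q ∈ n.primeFactors, (q - 1))
      = 2 * n * ∏ q ∈ n.primeFactors, (q - 1) := by ring
    _ ≤ σ 1 n * ∏ q ∈ n.primeFactors, (q - 1) := Nat.mul_le_mul_right _ h
    _ < n * ∏ q ∈ n.primeFactors, q := sigma_one_mul_prod_sub_one_lt hn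

theorem card_primeFactors_ge_minFac (n : ℕ) (hn : 0 < n)
    (hnondef : 2 * n ≤ sigma1 n) :
    n.primeFactors.card ≥ n.minFac := by
  have hn1 : 1 < n := by
    by_contra h
    obtain rfl : n = 1 := by omega
    simp [sigma1] at hnondef
  set p := n.minFac
  set P' := ∏ q ∈ n.primeFactors, (q - 1)
  have hp : 1 < p := (Nat.minFac_prime hn1.ne').one_lt
  have habund := two_mul_prod_primeFactors_sub_one_lt hn1 (by rwa [sigma_one_apply])
  have htelescope :=
    mul_prod_le_add_card_mul_prod_sub_one (S := n.primeFactors) (m := p - 1) fun q hq ↦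
    Nat.sub_one_lt_of_le (by omega) <| Nat.minFac_le_of_dvd
      (Nat.prime_of_mem_primeFactors hq).two_le (Nat.dvd_of_mem_primeFactors hq)
  have : (p - 1) * 2 * P' < (p - 1 + n.primeFactors.card) * P' :=
    calc (p - 1) * 2 * P' = (p - 1) * (2 * P') := mul_assoc ..
      _ < (p - 1) * ∏ q ∈ n.primeFactors, q := Nat.mul_lt_mul_of_pos_left habund (by omega)
      _ ≤ _ := htelescope
  have := Nat.lt_of_mul_lt_mul_right this
  omega
end

section
/- If n is a perfect number, then v(n) > 0. -/
/-- `v n = ∑_{d ∣ n, d > 1} (1/d) · log ((τ(n) - 1) / d)`. -/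
noncomputable def v (n : ℕ) : ℝ :=
  ∑ d ∈ n.divisors.filter (fun d => 1 < d),
    (1 / (d : ℝ)) * Real.log (((n.divisors.card : ℝ) - 1) / (d : ℝ))

/-!
For a perfect number `n`, the weights `p d = 1 / d` on the divisors `d > 1` sum to `σ(n)/n - 1 = 1`,
and there are `T = τ(n) - 1` of them, so `v n = ∑ p d * log (T * p d) = log T - H(p)` is the gap in
the entropy bound `H(p) ≤ log T`. The gap is strict because `p` is not uniform: a perfect number is
not prime, so besides `n` it has a divisor `1 < m < n`.
-/

open Finset Real

theorem Real.sum_mul_log_card_mul_pos {ι : Type*} {s : Finset ι} {p : ι → ℝ}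
    (hp : ∀ i ∈ s, 0 ≤ p i) (hsum : ∑ i ∈ s, p i = 1) {i j : ι} (hi : i ∈ s) (hj : j ∈ s)
    (hij : p i ≠ p j) : 0 < ∑ k ∈ s, p k * log (#s * p k) := by
  have hs : (0 : ℝ) < #s := by exact_mod_cast card_pos.2 ⟨i, hi⟩
  obtain ⟨k, hk, hk1⟩ : ∃ k ∈ s, (#s : ℝ) * p k ≠ 1 := by
    by_contra! h
    exact hij (mul_left_cancel₀ hs.ne' ((h i hi).trans (h j hj).symm))
  have key : ∑ k ∈ s, ((#s : ℝ) * p k - 1) < ∑ k ∈ s, (#s : ℝ) * p k * log (#s * p k) :=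
    sum_lt_sum (fun k hk ↦ self_sub_one_le_mul_log (by have := hp k hk; positivity))
      ⟨k, hk, self_sub_one_lt_mul_log (by have := hp k hk; positivity) hk1⟩
  rw [sum_sub_distrib, ← mul_sum, hsum, sum_const, nsmul_one, mul_one, sub_self] at key
  simp_rw [mul_assoc, ← mul_sum] at key
  exact pos_of_mul_pos_right key hs.le

theorem Nat.sum_one_div_divisors {n : ℕ} (hn : n ≠ 0) :
    ∑ d ∈ n.divisors, 1 / (d : ℝ) = (∑ d ∈ n.divisors, d : ℕ) / n := by
  rw [eq_div_iff (by exact_mod_cast hn), sum_mul, ← Nat.sum_div_divisors, Nat.cast_sum]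
  refine sum_congr rfl fun d hd ↦ ?_
  have hd0 : (d : ℝ) ≠ 0 := by exact_mod_cast (Nat.pos_of_mem_divisors hd).ne'
  rw [Nat.cast_div (Nat.dvd_of_mem_divisors hd) hd0, one_div_div,
    div_mul_cancel₀ _ (by exact_mod_cast hn)]

theorem Nat.divisors_filter_one_lt (n : ℕ) :
    n.divisors.filter (fun d ↦ 1 < d) = n.divisors.erase 1 := by
  ext d
  simp only [mem_filter, mem_erase]
  constructor
  · rintro ⟨hd, h1⟩
    exact ⟨h1.ne', hd⟩
  · rintro ⟨h1, hd⟩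
    exact ⟨hd, lt_of_le_of_ne (Nat.pos_of_mem_divisors hd) (Ne.symm h1)⟩

theorem Nat.Perfect.sum_one_div_divisors_filter_one_lt {n : ℕ} (h : n.Perfect) :
    ∑ d ∈ n.divisors.filter (fun d ↦ 1 < d), 1 / (d : ℝ) = 1 := by
  have hn := h.2.ne'
  rw [Nat.divisors_filter_one_lt, sum_erase_eq_sub (Nat.one_mem_divisors.2 hn),
    Nat.sum_one_div_divisors hn, (Nat.perfect_iff_sum_divisors_eq_two_mul h.2).1 h]
  push_cast
  field_simp
  ring

theorem Nat.Perfect.one_lt {n : ℕ} (h : n.Perfect) : 1 < n := by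
  obtain ⟨hsum, hn⟩ := h
  by_contra! h1
  obtain rfl : n = 1 := by omega
  simp at hsum

theorem v_pos_of_perfect (n : ℕ) (hn : 0 < n)
    (hperfect : ∑ d ∈ n.divisors, d = 2 * n) :
    v n > 0 := by
  have hP : n.Perfect := (Nat.perfect_iff_sum_divisors_eq_two_mul hn).2 hperfect
  obtain ⟨m, hm_dvd, hm_two, hm_lt⟩ :=
    Nat.exists_dvd_of_not_prime2 hP.one_lt fun hp ↦ hp.not_perfect hP
  have hcard : (#(n.divisors.filter (fun d ↦ 1 < d)) : ℝ) = #n.divisors - 1 := by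
    rw [Nat.divisors_filter_one_lt, card_erase_of_mem (Nat.one_mem_divisors.2 hn.ne'),
      Nat.cast_pred (card_pos.2 ⟨1, Nat.one_mem_divisors.2 hn.ne'⟩)]
  unfold v
  simp_rw [← hcard, div_eq_mul_one_div (#(n.divisors.filter _) : ℝ)]
  refine Real.sum_mul_log_card_mul_pos (fun d _ ↦ by positivity)
    hP.sum_one_div_divisors_filter_one_lt (i := m) (j := n) ?_ ?_ ?_
  · exact mem_filter.2 ⟨Nat.mem_divisors.2 ⟨hm_dvd, hn.ne'⟩, hm_two⟩
  · exact mem_filter.2 ⟨Nat.mem_divisors_self n hn.ne', hP.one_lt⟩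
  · simpa using hm_lt.ne
end
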